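/- For every sequence a : ℕ → ℚ and every n ∈ ℕ, the alternating convolution Σ_{i=0}^{2n} (−1)^i a_i a_{2n−i} is invariant under the transformation g_m = Σ_{k=0}^{m} a_{m−k}/k!: that is, Σ_{i=0}^{2n} (−1)^i g_i g_{2n−i} = Σ_{i=0}^{2n} (−1)^i a_i a_{2n−i}. -/

import Mathlib

/-!
With `A = ∑ aₘ Xᵐ`, the generating function of `g` is `exp X * A`, and the
alternating convolution at index `m` is the coefficient of `Xᵐ` in `A(-X) * A(X)`. Replacing `A` by
`exp X * A` multiplies this product by `exp (-X) * exp X = 1`.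
-/

open PowerSeries Finset

namespace PowerSeries

theorem coeff_evalNegHom_mul_self {R : Type*} [CommRing R] (f : R⟦X⟧) (m : ℕ) :
    coeff m (evalNegHom f * f)
      = ∑ i ∈ range (m + 1), (-1 : R) ^ i * coeff i f * coeff (m - i) f := by
  rw [coeff_mul, Nat.sum_antidiagonal_eq_sum_range_succ_mk]
  simp only [evalNegHom, coeff_rescale]

theorem evalNegHom_exp_mul_mul_self {R : Type*} [CommRing R] [Algebra ℚ R] (f : R⟦X⟧) :
    evalNegHom (exp R * f) * (exp R * f) = evalNegHom f * f := by
  calc evalNegHom (exp R * f) * (exp R * f)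
      = (exp R * evalNegHom (exp R)) * (evalNegHom f * f) := by rw [map_mul]; ring
    _ = evalNegHom f * f := by rw [exp_mul_exp_neg_eq_one, one_mul]

theorem coeff_exp_mul_mk {K : Type*} [Field K] [CharZero K] (a : ℕ → K) (m : ℕ) :
    coeff m (exp K * mk a) = ∑ k ∈ range (m + 1), a (m - k) / (k.factorial : K) := by
  rw [coeff_mul, Nat.sum_antidiagonal_eq_sum_range_succ_mk]
  refine sum_congr rfl fun k _ => ?_
  simp [coeff_exp, div_eq_inv_mul]

end PowerSeries

theorem alternating_convolution_invariant (a : ℕ → ℚ) (n : ℕ) (g : ℕ → ℚ)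
    (hg : ∀ m, g m = ∑ k ∈ Finset.range (m + 1), a (m - k) / (Nat.factorial k : ℚ)) :
    ∑ i ∈ Finset.range (2 * n + 1), (-1 : ℚ) ^ i * g i * g (2 * n - i)
      = ∑ i ∈ Finset.range (2 * n + 1), (-1 : ℚ) ^ i * a i * a (2 * n - i) := by
  have hG : mk g = exp ℚ * mk a := by
    ext m
    rw [coeff_mk, hg]
    exact (coeff_exp_mul_mk a m).symm
  have h := congrArg (coeff (2 * n)) (evalNegHom_exp_mul_mul_self (mk a))
  rw [← hG, coeff_evalNegHom_mul_self, coeff_evalNegHom_mul_self] at h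
  simpa only [coeff_mk] using h
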